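/- The group (ℚ; +) trace defines the group (ℚ/ℤ; +): letting τ : ℚ/ℤ → ℚ be the injection sending each coset γ + ℤ to its unique representative in [0,1) ∩ ℚ, for every n ≥ 1 and every set X ⊆ (ℚ/ℤ)^n definable with parameters in the abelian group (ℚ/ℤ; +), there is a set Y ⊆ ℚ^n definable with parameters in the abelian group (ℚ; +) such that for all α₁,…,αₙ ∈ ℚ/ℤ: (α₁,…,αₙ) ∈ X if and only if (τ(α₁),…,τ(αₙ)) ∈ Y. -/

import Mathlib

open FirstOrder FirstOrder.Language

/-- The function symbols of the language of abelian groups: `0`, `-`, `+`. -/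
inductive abFunc : ℕ → Type
  | zero : abFunc 0
  | neg : abFunc 1
  | add : abFunc 2

/-- The first-order language of abelian groups `{+, -, 0}`. -/
def abLang : Language := ⟨abFunc, fun _ => Empty⟩

/-- Any additive group as a structure in the language of abelian groups. -/
instance (G : Type*) [AddGroup G] : abLang.Structure G where
  funMap := fun {n} f x =>
    match n, f, x with
    | 0, .zero, _ => 0
    | 1, .neg, x => -x 0
    | 2, .add, x => x 0 + x 1
  RelMap := fun {_} R _ => nomatch R

/-- The group `ℚ/ℤ`. -/
abbrev QModZ : Type := ℚ ⧸ AddSubgroup.zmultiples (1 : ℚ)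

/-!
Every definable subset of a power of `ℚ/ℤ` is a Boolean combination of linear equations
`∑ cᵢ xᵢ = γ`. Eliminating `∃ y` from such a combination comes down to describing the `t` for which
some `y` satisfies `m q • y = t q` for exactly a prescribed set of indices `q`. As `ℚ/ℤ` is
divisible, hence an injective `ℤ`-module, solvability of a system is a finite conjunction of linear
equations in `t`. As its `n`-torsion is finite, the solutions of a system with a nonzero
coefficient form a finite coset whose size does not depend on `t`, so inclusion–exclusion expresses
the number of solutions avoiding the remaining equations through the list of solvable subsystems.

On representatives in `[0, 1)`, the equation `∑ cᵢ αᵢ = γ` in `ℚ/ℤ` says that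
`∑ cᵢ τ(αᵢ) - τ(γ)` is an integer, of absolute value at most `∑ |cᵢ| + 1`: a finite disjunction of
linear equations over `ℚ`.
-/

open Set

section LinearBoolean

variable {G : Type*} [AddCommGroup G] {ι : Type*} [Fintype ι]

def linearEqSet (c : ι → ℤ) (γ : G) : Set (ι → G) := {x | ∑ i, c i • x i = γ}

/-- The quantifier-free definable sets of the abelian group `G`. -/
inductive IsLinearBoolean : Set (ι → G) → Prop
  | basic (c : ι → ℤ) (γ : G) : IsLinearBoolean (linearEqSet c γ)
  | compl {s : Set (ι → G)} : IsLinearBoolean s → IsLinearBoolean sᶜ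
  | inter {s t : Set (ι → G)} : IsLinearBoolean s → IsLinearBoolean t → IsLinearBoolean (s ∩ t)

namespace IsLinearBoolean

variable {s t : Set (ι → G)}

theorem union (hs : IsLinearBoolean s) (ht : IsLinearBoolean t) : IsLinearBoolean (s ∪ t) := by
  simpa [compl_inter] using (hs.compl.inter ht.compl).compl

theorem univ : IsLinearBoolean (Set.univ : Set (ι → G)) := by
  simpa [linearEqSet] using basic (0 : ι → ℤ) (0 : G)

theorem empty : IsLinearBoolean (∅ : Set (ι → G)) := by
  simpa using univ.compl

theorem biInter {κ : Type*} {S : Set κ} (hS : S.Finite) {f : κ → Set (ι → G)}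
    (hf : ∀ q ∈ S, IsLinearBoolean (f q)) : IsLinearBoolean (⋂ q ∈ S, f q) := by
  induction S, hS using Set.Finite.induction_on with
  | empty => simpa using univ
  | @insert a S _ _ ih =>
    rw [biInter_insert]
    exact (hf a (mem_insert a S)).inter (ih fun q hq => hf q (mem_insert_of_mem a hq))

theorem biUnion {κ : Type*} {S : Set κ} (hS : S.Finite) {f : κ → Set (ι → G)}
    (hf : ∀ q ∈ S, IsLinearBoolean (f q)) : IsLinearBoolean (⋃ q ∈ S, f q) := by
  simpa using (biInter hS fun q hq => (hf q hq).compl).compl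

theorem iInter {κ : Type*} [Finite κ] {f : κ → Set (ι → G)} (hf : ∀ q, IsLinearBoolean (f q)) :
    IsLinearBoolean (⋂ q, f q) := by
  simpa using biInter finite_univ fun q _ => hf q

theorem setOf_mem_iff (hs : IsLinearBoolean s) (p : Prop) : IsLinearBoolean {x | x ∈ s ↔ p} := by
  by_cases hp : p
  · simpa [hp] using hs
  · convert hs.compl using 1
    ext
    simp [hp]

theorem setOf_pattern {κ : Type*} [Finite κ] {f : κ → Set (ι → G)}
    (hf : ∀ q, IsLinearBoolean (f q)) (Φ : Set (κ → Prop)) :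
    IsLinearBoolean {x | (fun q => x ∈ f q) ∈ Φ} := by
  have h : {x | (fun q => x ∈ f q) ∈ Φ} = ⋃ b ∈ Φ, ⋂ q, {x | x ∈ f q ↔ b q} := by
    ext x
    simp only [mem_ofPred_eq, mem_iUnion, mem_iInter, exists_prop]
    constructor
    · exact fun hx => ⟨_, hx, fun q => Iff.rfl⟩
    · rintro ⟨b, hb, hxb⟩
      rwa [funext fun q => propext (hxb q)]
  rw [h]
  exact biUnion Φ.toFinite fun b _ => iInter fun q => (hf q).setOf_mem_iff (b q)

theorem exists_pattern (h : IsLinearBoolean s) :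
    ∃ (κ : Type) (_ : Fintype κ) (c : κ → ι → ℤ) (γ : κ → G) (Φ : Set (κ → Prop)),
      s = {x | (fun q => x ∈ linearEqSet (c q) (γ q)) ∈ Φ} := by
  induction h with
  | basic c γ => exact ⟨Unit, inferInstance, fun _ => c, fun _ => γ, {b | b ()}, rfl⟩
  | compl _ ih =>
    obtain ⟨κ, _, c, γ, Φ, rfl⟩ := ih
    exact ⟨κ, inferInstance, c, γ, Φᶜ, rfl⟩
  | inter _ _ ihs iht =>
    obtain ⟨κ₁, _, c₁, γ₁, Φ₁, rfl⟩ := ihs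
    obtain ⟨κ₂, _, c₂, γ₂, Φ₂, rfl⟩ := iht
    exact ⟨κ₁ ⊕ κ₂, inferInstance, Sum.elim c₁ c₂, Sum.elim γ₁ γ₂,
      {b | b ∘ Sum.inl ∈ Φ₁ ∧ b ∘ Sum.inr ∈ Φ₂}, rfl⟩

theorem preimage_affine_linearEqSet {κ : Type*} [Fintype κ] (c : ι → κ → ℤ) (δ : ι → G)
    (e : ι → ℤ) (γ : G) :
    (fun x : κ → G => fun i => ∑ j, c i j • x j + δ i) ⁻¹' linearEqSet e γ =
      linearEqSet (fun j => ∑ i, e i * c i j) (γ - ∑ i, e i • δ i) := by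
  ext x
  simp only [linearEqSet, mem_preimage, mem_ofPred_eq, eq_sub_iff_add_eq, smul_add,
    Finset.sum_add_distrib, Finset.smul_sum, smul_smul, Finset.sum_smul]
  rw [Finset.sum_comm]

theorem preimage_affine {κ : Type*} [Fintype κ] (h : IsLinearBoolean s) (c : ι → κ → ℤ)
    (δ : ι → G) : IsLinearBoolean ((fun x : κ → G => fun i => ∑ j, c i j • x j + δ i) ⁻¹' s) := by
  induction h with
  | basic e γ =>
    rw [preimage_affine_linearEqSet]
    exact basic _ _
  | compl _ ih => exact ih.compl
  | inter _ _ ihs iht => exact ihs.inter iht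

theorem preimage_comp {κ : Type*} [Fintype κ] (h : IsLinearBoolean s) (σ : ι → κ) :
    IsLinearBoolean ((· ∘ σ) ⁻¹' s) := by
  classical
  convert h.preimage_affine (fun i j => if σ i = j then 1 else 0) 0 using 2
  ext x i
  simp [ite_smul]

end IsLinearBoolean

end LinearBoolean

section Divisible

variable {G : Type*} [AddCommGroup G] [DivisibleBy G ℤ] {κ : Type*} [Fintype κ]

theorem exists_forall_zsmul_eq_iff_ker_le (m : κ → ℤ) (t : κ → G) :
    (∃ y, ∀ q, m q • y = t q) ↔
      LinearMap.ker (Fintype.linearCombination ℤ m) ≤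
        LinearMap.ker (Fintype.linearCombination ℤ t) := by
  classical
  constructor
  · rintro ⟨y, hy⟩ c hc
    simp only [LinearMap.mem_ker, Fintype.linearCombination_apply, smul_eq_mul] at hc ⊢
    simp only [← hy, smul_smul, ← Finset.sum_smul, hc, zero_smul]
  · intro hle
    set K := LinearMap.ker (Fintype.linearCombination ℤ m)
    have hinj : Function.Injective (K.liftQ (Fintype.linearCombination ℤ m) le_rfl) :=
      LinearMap.ker_eq_bot.1 (K.ker_liftQ_eq_bot _ _ le_rfl)
    obtain ⟨e, he⟩ := (Module.Baer.of_divisible G).extension_property _ hinj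
      (K.liftQ (Fintype.linearCombination ℤ t) hle)
    refine ⟨e 1, fun q => ?_⟩
    have hq := LinearMap.congr_fun he (K.mkQ (Pi.single q 1))
    simp only [LinearMap.comp_apply, Submodule.mkQ_apply, Submodule.liftQ_apply,
      Fintype.linearCombination_apply_single, one_smul] at hq
    rw [← hq, ← map_zsmul, smul_eq_mul, mul_one]

theorem isLinearBoolean_setOf_exists_forall_zsmul_eq (m : κ → ℤ) :
    IsLinearBoolean {t : κ → G | ∃ y, ∀ q, m q • y = t q} := by
  obtain ⟨S, hS⟩ := IsNoetherian.noetherian (LinearMap.ker (Fintype.linearCombination ℤ m))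
  have h : {t : κ → G | ∃ y, ∀ q, m q • y = t q} = ⋂ c ∈ (S : Set (κ → ℤ)), linearEqSet c 0 := by
    ext t
    simp only [mem_ofPred_eq, exists_forall_zsmul_eq_iff_ker_le, ← hS, Submodule.span_le,
      mem_iInter, subset_def, SetLike.mem_coe, LinearMap.mem_ker, Fintype.linearCombination_apply,
      linearEqSet]
  rw [h]
  exact IsLinearBoolean.biInter S.finite_toSet fun c _ => .basic c 0

end Divisible

theorem Set.Finite.ncard_inter_biInter_compl {α ι : Type*} [DecidableEq ι] {E : Set α}
    (hE : E.Finite) (F : ι → Set α) (N : Finset ι) :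
    ((E ∩ ⋂ j ∈ N, (F j)ᶜ).ncard : ℤ) =
      ∑ T ∈ N.powerset, (-1) ^ T.card * ((E ∩ ⋂ j ∈ T, F j).ncard : ℤ) := by
  induction N using Finset.induction_on generalizing E with
  | empty => simp
  | @insert a N ha ih =>
    have hsplit := ncard_inter_add_ncard_sdiff_eq_ncard (E ∩ ⋂ j ∈ N, (F j)ᶜ) (F a)
      (hE.subset inter_subset_left)
    have hinter : (E ∩ ⋂ j ∈ N, (F j)ᶜ) ∩ F a = E ∩ F a ∩ ⋂ j ∈ N, (F j)ᶜ :=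
      inter_right_comm _ _ _
    have hdiff : (E ∩ ⋂ j ∈ N, (F j)ᶜ) \ F a = E ∩ ⋂ j ∈ insert a N, (F j)ᶜ := by
      rw [Finset.set_biInter_insert, sdiff_eq, inter_assoc, inter_comm (⋂ j ∈ N, (F j)ᶜ)]
    have hinsert : ∀ T ∈ N.powerset,
        (-1) ^ (insert a T).card * ((E ∩ ⋂ j ∈ insert a T, F j).ncard : ℤ) =
          -((-1) ^ T.card * ((E ∩ F a ∩ ⋂ j ∈ T, F j).ncard : ℤ)) := by
      intro T hT
      have haT : a ∉ T := fun h => ha (Finset.mem_powerset.1 hT h)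
      rw [Finset.card_insert_of_notMem haT, Finset.set_biInter_insert, ← inter_assoc, pow_succ]
      ring
    rw [Finset.sum_powerset_insert ha, Finset.sum_congr rfl hinsert, Finset.sum_neg_distrib,
      ← ih hE, ← ih (hE.subset inter_subset_left), ← hinter, ← hdiff]
    omega

section Counting

variable {G : Type*} [AddCommGroup G] {κ : Type*}

def solSet (m : κ → ℤ) (t : κ → G) (s : Set κ) : Set G := ⋂ q ∈ s, {y | m q • y = t q}

theorem solSet_union (m : κ → ℤ) (t : κ → G) (s s' : Set κ) :
    solSet m t (s ∪ s') = solSet m t s ∩ solSet m t s' :=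
  biInter_union s s' _

theorem ncard_solSet_of_mem {m : κ → ℤ} {t : κ → G} {s : Set κ} {y₀ : G}
    (hy₀ : y₀ ∈ solSet m t s) : (solSet m t s).ncard = (solSet m (0 : κ → G) s).ncard := by
  have h : solSet m t s = (y₀ + ·) '' solSet m (0 : κ → G) s := by
    simp only [solSet, mem_iInter₂, mem_ofPred_eq] at hy₀
    ext y
    simp only [solSet, mem_image, mem_iInter₂, mem_ofPred_eq, Pi.zero_apply]
    constructor
    · intro hy
      refine ⟨y - y₀, fun q hq => ?_, add_sub_cancel y₀ y⟩
      rw [smul_sub, hy q hq, hy₀ q hq, sub_self]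
    · rintro ⟨z, hz, rfl⟩ q hq
      rw [smul_add, hz q hq, hy₀ q hq, add_zero]
  rw [h, ncard_image_of_injective _ (add_right_injective y₀)]

theorem finite_setOf_zsmul_eq (htors : ∀ n : ℤ, n ≠ 0 → {y : G | n • y = 0}.Finite) {n : ℤ}
    (hn : n ≠ 0) (g : G) : {y : G | n • y = g}.Finite := by
  rcases eq_empty_or_nonempty {y : G | n • y = g} with h | ⟨y₀, hy₀⟩
  · simp [h]
  · refine ((htors n hn).preimage (sub_left_injective (b := y₀)).injOn).subset fun y hy => ?_
    simp only [mem_preimage, mem_ofPred_eq, smul_sub] at hy hy₀ ⊢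
    rw [hy, hy₀, sub_self]

theorem finite_solSet (htors : ∀ n : ℤ, n ≠ 0 → {y : G | n • y = 0}.Finite) {m : κ → ℤ}
    {s : Set κ} {q : κ} (hq : q ∈ s) (hm : m q ≠ 0) (t : κ → G) : (solSet m t s).Finite :=
  (finite_setOf_zsmul_eq htors hm (t q)).subset (biInter_subset_of_mem hq)

variable [Fintype κ]

theorem isLinearBoolean_setOf_solSet_nonempty [DivisibleBy G ℤ] (m : κ → ℤ) (s : Set κ) :
    IsLinearBoolean {t : κ → G | (solSet m t s).Nonempty} := by
  classical
  convert (isLinearBoolean_setOf_exists_forall_zsmul_eq (G := G) fun q : s => m q).preimage_comp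
    Subtype.val using 1
  ext t
  simp [solSet, Set.Nonempty]

end Counting

section Elimination

variable {G : Type*} [AddCommGroup G] {κ : Type*} [Fintype κ]

theorem isLinearBoolean_setOf_exists_zsmul_eq_iff_of_mem [DivisibleBy G ℤ]
    (htors : ∀ n : ℤ, n ≠ 0 → {y : G | n • y = 0}.Finite) (m : κ → ℤ) {b : κ → Prop} {q₀ : κ}
    (hb : b q₀) (hm : m q₀ ≠ 0) :
    IsLinearBoolean {t : κ → G | ∃ y, ∀ q, m q • y = t q ↔ b q} := by
  classical
  set P := {q | b q}
  set N := Finset.univ.filter fun q => ¬ b q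
  have hP : q₀ ∈ P := hb
  have hsol : ∀ t : κ → G,
      {y | ∀ q, m q • y = t q ↔ b q} = solSet m t P ∩ ⋂ q ∈ N, {y | m q • y = t q}ᶜ := by
    intro t
    ext y
    simp only [solSet, N, P, mem_ofPred_eq, mem_inter_iff, mem_iInter₂, mem_compl_iff,
      Finset.mem_filter, Finset.mem_univ, true_and]
    exact ⟨fun h => ⟨fun q hq => (h q).2 hq, fun q hq hy => hq ((h q).1 hy)⟩,
      fun h q => ⟨fun hy => by_contra fun hq => h.2 q hq hy, h.1 q⟩⟩
  have hcount : ∀ t : κ → G, ({y | ∀ q, m q • y = t q ↔ b q}.ncard : ℤ) =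
      ∑ T ∈ N.powerset, (-1) ^ T.card *
        if (solSet m t (P ∪ T)).Nonempty then ((solSet m (0 : κ → G) (P ∪ T)).ncard : ℤ)
        else 0 := by
    intro t
    rw [hsol, (finite_solSet htors hP hm t).ncard_inter_biInter_compl]
    refine Finset.sum_congr rfl fun T _ => ?_
    rw [← Finset.set_biInter_coe, ← solSet, ← solSet_union]
    split_ifs with hne
    · rw [ncard_solSet_of_mem hne.some_mem]
    · rw [not_nonempty_iff_eq_empty.1 hne, ncard_empty, Nat.cast_zero]
  have h : {t : κ → G | ∃ y, ∀ q, m q • y = t q ↔ b q} =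
      {t | (fun T : Finset κ => t ∈ {t | (solSet m t (P ∪ T)).Nonempty}) ∈
        {p | 0 < ∑ T ∈ N.powerset, (-1) ^ T.card *
          if p T then ((solSet m (0 : κ → G) (P ∪ T)).ncard : ℤ) else 0}} := by
    ext t
    have hfin := (finite_solSet htors hP hm t).subset (hsol t ▸ inter_subset_left)
    simp only [mem_ofPred_eq, ← hcount, Nat.cast_pos, ncard_pos hfin]
    rfl
  rw [h]
  exact IsLinearBoolean.setOf_pattern (fun T => isLinearBoolean_setOf_solSet_nonempty m _) _

theorem isLinearBoolean_setOf_exists_zsmul_eq_iff_of_forall [Infinite G]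
    (htors : ∀ n : ℤ, n ≠ 0 → {y : G | n • y = 0}.Finite) (m : κ → ℤ) {b : κ → Prop}
    (hb : ∀ q, b q → m q = 0) :
    IsLinearBoolean {t : κ → G | ∃ y, ∀ q, m q • y = t q ↔ b q} := by
  classical
  have h : {t : κ → G | ∃ y, ∀ q, m q • y = t q ↔ b q} =
      ⋂ q ∈ {q | m q = 0}, {t | t ∈ linearEqSet (Pi.single q 1) 0 ↔ b q} := by
    ext t
    simp only [linearEqSet, mem_ofPred_eq, mem_iInter₂, Pi.single_apply, ite_smul, one_smul,
      zero_smul, Finset.sum_ite_eq', Finset.mem_univ, if_true]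
    constructor
    · rintro ⟨y, hy⟩ q hq
      simpa [hq, eq_comm] using hy q
    · intro ht
      have hbad : (⋃ q ∈ {q | m q ≠ 0}, {y : G | m q • y = t q}).Finite :=
        (toFinite _).biUnion fun q hq => finite_setOf_zsmul_eq htors hq (t q)
      obtain ⟨y, hy⟩ := hbad.infinite_compl.nonempty
      simp only [mem_compl_iff, mem_iUnion₂, mem_ofPred_eq, not_exists] at hy
      refine ⟨y, fun q => ?_⟩
      by_cases hq : m q = 0
      · simpa [hq, eq_comm] using ht q hq
      · exact iff_of_false (hy q hq) fun hbq => hq (hb q hbq)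
  rw [h]
  exact IsLinearBoolean.biInter (toFinite _) fun q _ =>
    (IsLinearBoolean.basic _ _).setOf_mem_iff _

theorem isLinearBoolean_setOf_exists_zsmul_eq_iff [DivisibleBy G ℤ] [Infinite G]
    (htors : ∀ n : ℤ, n ≠ 0 → {y : G | n • y = 0}.Finite) (m : κ → ℤ) (b : κ → Prop) :
    IsLinearBoolean {t : κ → G | ∃ y, ∀ q, m q • y = t q ↔ b q} := by
  by_cases h : ∃ q, b q ∧ m q ≠ 0
  · obtain ⟨q₀, hb, hm⟩ := h
    exact isLinearBoolean_setOf_exists_zsmul_eq_iff_of_mem htors m hb hm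
  · push Not at h
    exact isLinearBoolean_setOf_exists_zsmul_eq_iff_of_forall htors m h

theorem IsLinearBoolean.setOf_exists [DivisibleBy G ℤ] [Infinite G]
    (htors : ∀ n : ℤ, n ≠ 0 → {y : G | n • y = 0}.Finite) {ι : Type*} [Fintype ι]
    {S : Set (Option ι → G)} (h : IsLinearBoolean S) :
    IsLinearBoolean {x : ι → G | ∃ y, (Option.elim · y x) ∈ S} := by
  obtain ⟨κ, _, c, γ, Φ, rfl⟩ := h.exists_pattern
  have key : ∀ x y q, (Option.elim · y x) ∈ linearEqSet (c q) (γ q) ↔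
      c q none • y = ∑ i, (-c q (some i)) • x i + γ q := by
    intro x y q
    simp only [linearEqSet, mem_ofPred_eq, Fintype.sum_option, Option.elim_none,
      Option.elim_some, neg_smul, Finset.sum_neg_distrib, neg_add_eq_sub, eq_sub_iff_add_eq]
  have h : {x : ι → G |
      ∃ y, (Option.elim · y x) ∈ {z | (fun q => z ∈ linearEqSet (c q) (γ q)) ∈ Φ}} =
      ⋃ b ∈ Φ, (fun x q => ∑ i, (-c q (some i)) • x i + γ q) ⁻¹'
        {t | ∃ y, ∀ q, c q none • y = t q ↔ b q} := by
    ext x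
    simp only [mem_ofPred_eq, mem_iUnion, mem_preimage, key, exists_prop]
    constructor
    · rintro ⟨y, hy⟩
      exact ⟨_, hy, y, fun q => Iff.rfl⟩
    · rintro ⟨b, hb, y, hy⟩
      exact ⟨y, by rwa [funext fun q => propext (hy q)]⟩
  rw [h]
  exact IsLinearBoolean.biUnion Φ.toFinite fun b _ =>
    (isLinearBoolean_setOf_exists_zsmul_eq_iff htors _ b).preimage_affine _ _

end Elimination

theorem exists_realize_eq_sum_zsmul_add {G : Type*} [AddCommGroup G] {A : Set G} {β : Type*}
    [Fintype β] (t : abLang[[A]].Term β) :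
    ∃ (c : β → ℤ) (δ : G), ∀ v, t.realize v = ∑ i, c i • v i + δ := by
  classical
  induction t with
  | var i => exact ⟨Pi.single i 1, 0, fun v => by simp [Pi.single_apply, ite_smul]⟩
  | @func l f ts ih =>
    rcases f with f | a
    · cases f with
      | zero => exact ⟨0, 0, fun v => by change (0 : G) = _; simp⟩
      | neg =>
        obtain ⟨c, δ, h⟩ := ih 0
        refine ⟨-c, -δ, fun v => ?_⟩
        change -(ts 0).realize v = _
        simp only [h, Pi.neg_apply, neg_smul, Finset.sum_neg_distrib, neg_add]
      | add =>
        obtain ⟨c₁, δ₁, h₁⟩ := ih 0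
        obtain ⟨c₂, δ₂, h₂⟩ := ih 1
        refine ⟨c₁ + c₂, δ₁ + δ₂, fun v => ?_⟩
        change (ts 0).realize v + (ts 1).realize v = _
        simp only [h₁, h₂, Pi.add_apply, add_smul, Finset.sum_add_distrib]
        abel
    · cases l with
      | zero => exact ⟨0, a, fun v => by change (a : G) = _; simp⟩
      | succ l => exact a.elim

section Formulas

variable {G : Type*} [AddCommGroup G] [DivisibleBy G ℤ] [Infinite G] (A : Set G)

theorem isLinearBoolean_setOf_realize (htors : ∀ n : ℤ, n ≠ 0 → {y : G | n • y = 0}.Finite)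
    {α : Type*} [Fintype α] {k : ℕ} (φ : abLang[[A]].BoundedFormula α k) :
    IsLinearBoolean {z : α ⊕ Fin k → G | φ.Realize (z ∘ Sum.inl) (z ∘ Sum.inr)} := by
  induction φ with
  | falsum => simpa [BoundedFormula.Realize] using IsLinearBoolean.empty
  | equal t₁ t₂ =>
    obtain ⟨c₁, δ₁, h₁⟩ := exists_realize_eq_sum_zsmul_add t₁
    obtain ⟨c₂, δ₂, h₂⟩ := exists_realize_eq_sum_zsmul_add t₂
    convert IsLinearBoolean.basic (c₁ - c₂) (δ₂ - δ₁) using 1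
    ext z
    simp only [BoundedFormula.Realize, Sum.elim_comp_inl_inr, h₁, h₂, linearEqSet, mem_ofPred_eq,
      Pi.sub_apply, sub_smul, Finset.sum_sub_distrib]
    rw [sub_eq_sub_iff_add_eq_add, add_comm δ₂]
  | rel R => rcases R with R | R <;> exact R.elim
  | imp φ ψ ihφ ihψ =>
    convert ihφ.compl.union ihψ using 1
    ext z
    simp [imp_iff_not_or]
  | @all k φ ih =>
    let σ : α ⊕ Fin (k + 1) → Option (α ⊕ Fin k) :=
      Sum.elim (some ∘ Sum.inl)
        (Fin.snoc (α := fun _ => Option (α ⊕ Fin k)) (some ∘ Sum.inr) none)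
    have hσ : ∀ (z : α ⊕ Fin k → G) (a : G),
        (Option.elim · a z) ∘ σ = Sum.elim (z ∘ Sum.inl) (Fin.snoc (z ∘ Sum.inr) a) := by
      intro z a
      rw [Sum.comp_elim, Fin.comp_snoc]
      rfl
    convert ((ih.compl.preimage_comp σ).setOf_exists htors).compl using 1
    ext z
    simp only [BoundedFormula.realize_all, mem_ofPred_eq, mem_compl_iff, mem_preimage, hσ,
      Sum.elim_comp_inl, Sum.elim_comp_inr, not_exists, not_not]

theorem Set.Definable.isLinearBoolean (htors : ∀ n : ℤ, n ≠ 0 → {y : G | n • y = 0}.Finite)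
    {α : Type*} [Fintype α] {X : Set (α → G)} (h : A.Definable abLang X) : IsLinearBoolean X := by
  obtain ⟨φ, rfl⟩ := h
  convert (isLinearBoolean_setOf_realize A htors φ).preimage_comp (Sum.elim id Fin.elim0) using 1
  ext x
  simp only [mem_ofPred_eq, mem_preimage, Formula.Realize]
  congr!

end Formulas

section Terms

variable {M : Type*} [AddCommGroup M] {A : Set M} {β : Type*}

def zeroTerm : abLang[[A]].Term β := Term.func (Sum.inl abFunc.zero) Fin.elim0

def addTerm (t₁ t₂ : abLang[[A]].Term β) : abLang[[A]].Term β :=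
  Term.func (Sum.inl abFunc.add) ![t₁, t₂]

def negTerm (t : abLang[[A]].Term β) : abLang[[A]].Term β := Term.func (Sum.inl abFunc.neg) ![t]

def nsmulTerm (t : abLang[[A]].Term β) : ℕ → abLang[[A]].Term β
  | 0 => zeroTerm
  | n + 1 => addTerm (nsmulTerm t n) t

def zsmulTerm : ℤ → abLang[[A]].Term β → abLang[[A]].Term β
  | .ofNat n, t => nsmulTerm t n
  | .negSucc n, t => negTerm (nsmulTerm t (n + 1))

def sumTerm : {n : ℕ} → (Fin n → abLang[[A]].Term β) → abLang[[A]].Term β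
  | 0, _ => zeroTerm
  | n + 1, t => addTerm (sumTerm (t ∘ Fin.castSucc)) (t (Fin.last n))

@[simp] theorem realize_zeroTerm (v : β → M) : (zeroTerm : abLang[[A]].Term β).realize v = 0 := rfl

@[simp] theorem realize_addTerm (t₁ t₂ : abLang[[A]].Term β) (v : β → M) :
    (addTerm t₁ t₂).realize v = t₁.realize v + t₂.realize v := rfl

@[simp] theorem realize_negTerm (t : abLang[[A]].Term β) (v : β → M) :
    (negTerm t).realize v = -t.realize v := rfl

@[simp] theorem realize_nsmulTerm (t : abLang[[A]].Term β) (v : β → M) (n : ℕ) :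
    (nsmulTerm t n).realize v = n • t.realize v := by
  induction n with
  | zero => simp [nsmulTerm]
  | succ n ih => simp [nsmulTerm, ih, succ_nsmul]

@[simp] theorem realize_zsmulTerm (z : ℤ) (t : abLang[[A]].Term β) (v : β → M) :
    (zsmulTerm z t).realize v = z • t.realize v := by
  cases z <;> simp [zsmulTerm, negSucc_zsmul]

@[simp] theorem realize_sumTerm {n : ℕ} (t : Fin n → abLang[[A]].Term β) (v : β → M) :
    (sumTerm t).realize v = ∑ i, (t i).realize v := by
  induction n with
  | zero => simp [sumTerm]
  | succ n ih => simp [sumTerm, ih, Fin.sum_univ_castSucc]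

theorem definable_linearEqSet {n : ℕ} (c : Fin n → ℤ) {γ : M} (hγ : γ ∈ A) :
    A.Definable abLang (linearEqSet c γ) :=
  ⟨(sumTerm fun i => zsmulTerm (c i) (Term.var i)).equal (abLang.con ⟨γ, hγ⟩).term, by
    ext x
    simp [linearEqSet]⟩

end Terms

noncomputable instance : DivisibleBy QModZ ℤ :=
  QuotientAddGroup.mk_surjective.divisibleBy _ fun _ _ => rfl

instance : Infinite QModZ :=
  haveI : Fact ((0 : ℚ) < 1) := ⟨one_pos⟩
  (AddCircle.equivIco (1 : ℚ) 0).infinite_iff.2 (Set.Ico.infinite (by norm_num))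

theorem QModZ.finite_setOf_zsmul_eq_zero (n : ℤ) (hn : n ≠ 0) :
    {y : QModZ | n • y = 0}.Finite :=
  AddCircle.finite_torsion_of_isSMulRegular_int (1 : ℚ) n
    (IsSMulRegular.of_right_eq_zero_of_smul fun x hx => by simpa [hn] using hx)

section Trace

variable {τ : QModZ → ℚ} {ι : Type*} [Fintype ι]

theorem abs_sum_zsmul_sub_le {x : ι → ℚ} {r : ℚ} (hx : ∀ i, x i ∈ Ico (0 : ℚ) 1)
    (hr : r ∈ Ico (0 : ℚ) 1) (c : ι → ℤ) :
    |∑ i, c i • x i - r| ≤ ∑ i, |(c i : ℚ)| + 1 := by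
  have habs : ∀ {y : ℚ}, y ∈ Ico (0 : ℚ) 1 → |y| ≤ 1 := fun hy =>
    abs_le.2 ⟨by linarith [hy.1], hy.2.le⟩
  calc |∑ i, c i • x i - r| ≤ ∑ i, |c i • x i| + |r| := by
        refine (abs_sub _ _).trans ?_
        gcongr
        exact Finset.abs_sum_le_sum_abs _ _
    _ ≤ ∑ i, |(c i : ℚ)| + 1 := by
      refine add_le_add (Finset.sum_le_sum fun i _ => ?_) (habs hr)
      rw [zsmul_eq_mul, abs_mul]
      exact mul_le_of_le_one_right (abs_nonneg _) (habs (hx i))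

theorem mem_linearEqSet_iff_exists_int (hτ : ∀ x : QModZ, (τ x : QModZ) = x) (c : ι → ℤ)
    (γ : QModZ) (a : ι → QModZ) :
    a ∈ linearEqSet c γ ↔ ∃ k : ℤ, ∑ i, c i • τ (a i) = τ γ + k := by
  have h : ∑ i, c i • a i - γ = ((∑ i, c i • τ (a i) - τ γ : ℚ) : QModZ) := by
    simp [hτ]
  rw [linearEqSet, mem_ofPred_eq, ← sub_eq_zero, h, QuotientAddGroup.eq_zero_iff,
    AddSubgroup.mem_zmultiples_iff]
  simp only [zsmul_eq_mul, mul_one, eq_sub_iff_add_eq, eq_comm (b := _ + _), add_comm (τ γ)]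

theorem mem_linearEqSet_iff_exists_mem_Icc
    (hτ : ∀ x : QModZ, τ x ∈ Ico (0 : ℚ) 1 ∧ (τ x : QModZ) = x) (c : ι → ℤ) (γ : QModZ)
    (a : ι → QModZ) :
    a ∈ linearEqSet c γ ↔ ∃ k ∈ Finset.Icc (-(∑ i, |c i| + 1)) (∑ i, |c i| + 1),
      ∑ i, c i • τ (a i) = τ γ + k := by
  rw [mem_linearEqSet_iff_exists_int (fun x => (hτ x).2)]
  refine ⟨fun ⟨k, hk⟩ => ⟨k, ?_, hk⟩, fun ⟨k, _, hk⟩ => ⟨k, hk⟩⟩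
  have hle := abs_sum_zsmul_sub_le (fun i => (hτ (a i)).1) (hτ γ).1 c
  rw [hk, add_sub_cancel_left, ← Int.cast_abs] at hle
  rw [Finset.mem_Icc, ← abs_le]
  exact_mod_cast hle

theorem IsLinearBoolean.exists_definable_trace
    (hτ : ∀ x : QModZ, τ x ∈ Ico (0 : ℚ) 1 ∧ (τ x : QModZ) = x) {n : ℕ}
    {X : Set (Fin n → QModZ)} (h : IsLinearBoolean X) :
    ∃ Y : Set (Fin n → ℚ), (Set.univ : Set ℚ).Definable abLang Y ∧ ∀ a, a ∈ X ↔ τ ∘ a ∈ Y := by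
  induction h with
  | basic c γ =>
    refine ⟨⋃ k ∈ Finset.Icc (-(∑ i, |c i| + 1)) (∑ i, |c i| + 1), linearEqSet c (τ γ + k),
      definable_biUnion_finset (fun k => definable_linearEqSet c (Set.mem_univ _)) _, fun a => ?_⟩
    rw [mem_linearEqSet_iff_exists_mem_Icc hτ]
    simp only [mem_iUnion, linearEqSet, mem_ofPred_eq, Function.comp_apply, exists_prop]
  | compl _ ih =>
    obtain ⟨Y, hY, hXY⟩ := ih
    exact ⟨Yᶜ, hY.compl, fun a => not_congr (hXY a)⟩
  | inter _ _ ihs iht =>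
    obtain ⟨Y₁, hY₁, hXY₁⟩ := ihs
    obtain ⟨Y₂, hY₂, hXY₂⟩ := iht
    exact ⟨Y₁ ∩ Y₂, hY₁.inter hY₂, fun a => and_congr (hXY₁ a) (hXY₂ a)⟩

end Trace

/-- `(ℚ; +)` trace defines `(ℚ/ℤ; +)` via the injection `τ` sending each coset `γ + ℤ` to its
unique representative in `[0,1) ∩ ℚ`: every subset of a finite power of `ℚ/ℤ` definable with
parameters in the abelian group `ℚ/ℤ` is traced along `τ` by a subset definable with parameters
in the abelian group `ℚ`. -/
theorem rationals_traceDefine_rationals_mod_int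
    (τ : QModZ → ℚ)
    (hτ : ∀ x : QModZ, τ x ∈ Set.Ico (0 : ℚ) 1 ∧ QuotientAddGroup.mk (τ x) = x) :
    ∀ (n : ℕ) (X : Set (Fin n → QModZ)), Set.Definable (Set.univ : Set QModZ) abLang X →
      ∃ Y : Set (Fin n → ℚ), Set.Definable (Set.univ : Set ℚ) abLang Y ∧
        ∀ a : Fin n → QModZ, a ∈ X ↔ (τ ∘ a) ∈ Y :=
  fun _ _ hX => (hX.isLinearBoolean _ QModZ.finite_setOf_zsmul_eq_zero).exists_definable_trace hτ
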